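/- arXiv:2104.05021 — 3 statements merged into one kernel-verified Lean document; each statement's English description precedes it below -/
import Mathlib

section
/- Let N > R ≥ 1 be integers and let g_1,…,g_R: Q → R be functions on a set Q. Then for every positive semi-definite matrix Λ = (λ_{r,s}) ∈ R^{R×R} there exist vectors ξ_1,…,ξ_N ∈ R^R such that the centered empirical covariance matrix N^{-1} Σ_{n=1}^N (ξ_n − ξ̄)(ξ_n − ξ̄)ᵀ equals Λ (where ξ̄ = N^{-1} Σ_{n=1}^N ξ_n); consequently, every kernel of the form Σ_{r=1}^R Σ_{s=1}^R λ_{r,s} g_r(u) g_s(v) with Λ positive semi-definite is the empirical covariance kernel N^{-1} Σ_{n=1}^N (X_n^{NN}(u) − X̄^{NN}(u))(X_n^{NN}(v) − X̄^{NN}(v)) of the N fields X_n^{NN} = Σ_{r=1}^R ξ_{n,r} g_r, so the class of such empirical covariance kernels based on N fields coincides with the class of all CovNet kernels Σ_{r,s} λ_{r,s} g_r(u) g_s(v) with Λ positive semi-definite. -/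
noncomputable section

/-- The centered empirical covariance matrix of the coefficient vectors `ξ_1, …, ξ_N ∈ ℝ^R`:
`N⁻¹ Σ_n (ξ_n − ξ̄)(ξ_n − ξ̄)ᵀ`. -/
def empCovMat (N R : ℕ) (ξ : Fin N → Fin R → ℝ) (r s : Fin R) : ℝ :=
  (N : ℝ)⁻¹ * ∑ n, (ξ n r - (N : ℝ)⁻¹ * ∑ m, ξ m r) * (ξ n s - (N : ℝ)⁻¹ * ∑ m, ξ m s)

/-- The field `X_n^{NN} = Σ_r ξ_{n,r} g_r`. -/
def fieldNN {Q : Type*} (R : ℕ) (g : Fin R → Q → ℝ) (ξ : Fin R → ℝ) (u : Q) : ℝ :=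
  ∑ r, ξ r * g r u

/-- The centered empirical covariance kernel of the fields `X_1^{NN}, …, X_N^{NN}`:
`(u,v) ↦ N⁻¹ Σ_n (X_n^{NN}(u) − X̄^{NN}(u)) (X_n^{NN}(v) − X̄^{NN}(v))`. -/
def empCovKer {Q : Type*} (N R : ℕ) (g : Fin R → Q → ℝ) (ξ : Fin N → Fin R → ℝ)
    (u v : Q) : ℝ :=
  (N : ℝ)⁻¹ * ∑ n,
    (fieldNN R g (ξ n) u - (N : ℝ)⁻¹ * ∑ m, fieldNN R g (ξ m) u) *
    (fieldNN R g (ξ n) v - (N : ℝ)⁻¹ * ∑ m, fieldNN R g (ξ m) v)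

/-!
The empirical covariance matrix of `ξ` is `N⁻¹ CᵀC`, where `C` is the column-centred data matrix,
so it is positive semidefinite, and expanding the fields in the `g_r` shows that the empirical
covariance kernel is the CovNet kernel of this matrix. Conversely, write `Λ = BᵀB` and choose `R`
orthonormal vectors in `ℝᴺ` orthogonal to `(1, …, 1)`, which is possible because `R < N`. If `U`
is the `N × R` matrix with these columns, then `ξ = √N • U B` is already centred and
`N⁻¹ ξᵀξ = Bᵀ (UᵀU) B = Λ`.
-/

open Matrix

theorem exists_orthonormal_orthogonal {𝕜 E : Type*} [RCLike 𝕜] [NormedAddCommGroup E]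
    [InnerProductSpace 𝕜 E] [FiniteDimensional 𝕜 E] (v : E) {k : ℕ}
    (hk : k < Module.finrank 𝕜 E) :
    ∃ u : Fin k → E, Orthonormal 𝕜 u ∧ ∀ i, inner 𝕜 v (u i) = 0 := by
  have hdim : k ≤ Module.finrank 𝕜 (𝕜 ∙ v)ᗮ := by
    have := (𝕜 ∙ v).finrank_add_finrank_orthogonal
    have : Module.finrank 𝕜 (𝕜 ∙ v) ≤ 1 := (finrank_span_le_card ({v} : Set E)).trans (by simp)
    omega
  let b := stdOrthonormalBasis 𝕜 (𝕜 ∙ v)ᗮ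
  refine ⟨fun i => b (Fin.castLE hdim i), ?_, fun i => ?_⟩
  · exact (b.orthonormal.comp _ (Fin.castLE_injective hdim)).comp_linearIsometry
      (𝕜 ∙ v)ᗮ.subtypeₗᵢ
  · exact Submodule.inner_right_of_mem_orthogonal (Submodule.mem_span_singleton_self v) (b _).2

theorem exists_orthonormal_columns_sum_eq_zero {N R : ℕ} (hRN : R < N) :
    ∃ U : Matrix (Fin N) (Fin R) ℝ, Uᵀ * U = 1 ∧ ∀ r, ∑ n, U n r = 0 := by
  obtain ⟨u, hu, hv⟩ := exists_orthonormal_orthogonal (𝕜 := ℝ)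
    (WithLp.toLp 2 fun _ : Fin N => (1 : ℝ)) (by simpa using hRN)
  refine ⟨Matrix.of fun n r => u r n, ?_, fun r => by simpa [PiLp.inner_apply] using hv r⟩
  ext r s
  rw [orthonormal_iff_ite] at hu
  simpa [Matrix.mul_apply, PiLp.inner_apply, Matrix.one_apply, mul_comm] using hu r s

section

variable {N R : ℕ}

def centeredData (ξ : Fin N → Fin R → ℝ) : Matrix (Fin N) (Fin R) ℝ :=
  Matrix.of fun n r => ξ n r - (N : ℝ)⁻¹ * ∑ m, ξ m r

lemma centeredData_of_sum_eq_zero {ξ : Fin N → Fin R → ℝ} (hξ : ∀ r, ∑ n, ξ n r = 0) :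
    centeredData ξ = Matrix.of ξ := by
  ext n r
  simp [centeredData, hξ]

lemma empCovMat_eq_smul_transpose_mul (ξ : Fin N → Fin R → ℝ) :
    Matrix.of (empCovMat N R ξ) = (N : ℝ)⁻¹ • ((centeredData ξ)ᵀ * centeredData ξ) := by
  ext r s
  simp [empCovMat, centeredData, Matrix.mul_apply, Finset.mul_sum]

lemma empCovMat_posSemidef (ξ : Fin N → Fin R → ℝ) :
    (Matrix.of (empCovMat N R ξ)).PosSemidef := by
  rw [empCovMat_eq_smul_transpose_mul, ← conjTranspose_eq_transpose_of_trivial]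
  exact (posSemidef_conjTranspose_mul_self _).smul (by positivity)

lemma fieldNN_sub_mean {Q : Type*} (g : Fin R → Q → ℝ) (ξ : Fin N → Fin R → ℝ) (n : Fin N)
    (u : Q) :
    fieldNN R g (ξ n) u - (N : ℝ)⁻¹ * ∑ m, fieldNN R g (ξ m) u
      = ∑ r, centeredData ξ n r * g r u := by
  simp only [fieldNN, centeredData, of_apply, sub_mul, Finset.sum_sub_distrib, Finset.mul_sum,
    Finset.sum_mul]
  rw [Finset.sum_comm]
  simp only [mul_assoc]

lemma empCovKer_eq_sum_empCovMat {Q : Type*} (g : Fin R → Q → ℝ) (ξ : Fin N → Fin R → ℝ)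
    (u v : Q) :
    empCovKer N R g ξ u v = ∑ r, ∑ s, empCovMat N R ξ r s * g r u * g s v := by
  have hcov : ∀ r s, empCovMat N R ξ r s
      = (N : ℝ)⁻¹ * ∑ n, centeredData ξ n r * centeredData ξ n s := fun _ _ => rfl
  simp only [empCovKer, fieldNN_sub_mean, Finset.sum_mul_sum]
  simp only [Finset.mul_sum, hcov, Finset.sum_mul]
  rw [Finset.sum_comm]
  refine Finset.sum_congr rfl fun r _ => ?_
  rw [Finset.sum_comm]
  exact Finset.sum_congr rfl fun s _ => Finset.sum_congr rfl fun n _ => by ring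

open scoped MatrixOrder in
theorem exists_empCovMat_eq (hRN : R < N) {Λ : Matrix (Fin R) (Fin R) ℝ} (hΛ : Λ.PosSemidef) :
    ∃ ξ : Fin N → Fin R → ℝ, Matrix.of (empCovMat N R ξ) = Λ := by
  obtain ⟨B, rfl⟩ := CStarAlgebra.nonneg_iff_eq_star_mul_self.mp hΛ.nonneg
  obtain ⟨U, hU, hsum⟩ := exists_orthonormal_columns_sum_eq_zero hRN
  have hN : (0 : ℝ) < N := by exact_mod_cast (Nat.zero_le R).trans_lt hRN
  have hcol : ∀ r, ∑ n, of.symm (√N • (U * B)) n r = 0 := fun r => by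
    simp [Matrix.mul_apply, ← Finset.mul_sum, Finset.sum_comm (γ := Fin N), ← Finset.sum_mul, hsum]
  refine ⟨of.symm (√N • (U * B)), ?_⟩
  rw [empCovMat_eq_smul_transpose_mul, centeredData_of_sum_eq_zero hcol, Equiv.apply_symm_apply]
  calc _ = ((N : ℝ)⁻¹ * √N * √N) • (Bᵀ * (Uᵀ * U) * B) := by
        rw [transpose_smul, transpose_mul, Matrix.smul_mul, Matrix.mul_smul, smul_smul, smul_smul,
          Matrix.mul_assoc, Matrix.mul_assoc, Matrix.mul_assoc]
    _ = star B * B := by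
        rw [hU, mul_assoc, Real.mul_self_sqrt hN.le, inv_mul_cancel₀ hN.ne', one_smul,
          Matrix.mul_one, star_eq_conjTranspose, conjTranspose_eq_transpose_of_trivial]

end

theorem covnet_empirical_class_equivalence_general {Q : Type*} (N R : ℕ)
    (hNR : R < N) (g : Fin R → Q → ℝ) :
    (∀ Λ : Matrix (Fin R) (Fin R) ℝ, Λ.PosSemidef →
      ∃ ξ : Fin N → Fin R → ℝ,
        (∀ r s, empCovMat N R ξ r s = Λ r s) ∧
        (∀ u v : Q, empCovKer N R g ξ u v = ∑ r, ∑ s, Λ r s * g r u * g s v)) ∧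
    ({k : Q → Q → ℝ | ∃ ξ : Fin N → Fin R → ℝ, ∀ u v, k u v = empCovKer N R g ξ u v}
      = {k : Q → Q → ℝ | ∃ Λ : Matrix (Fin R) (Fin R) ℝ, Λ.PosSemidef ∧
          ∀ u v, k u v = ∑ r, ∑ s, Λ r s * g r u * g s v}) := by
  have realize : ∀ Λ : Matrix (Fin R) (Fin R) ℝ, Λ.PosSemidef →
      ∃ ξ : Fin N → Fin R → ℝ, (∀ r s, empCovMat N R ξ r s = Λ r s) ∧
        ∀ u v : Q, empCovKer N R g ξ u v = ∑ r, ∑ s, Λ r s * g r u * g s v := by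
    intro Λ hΛ
    obtain ⟨ξ, rfl⟩ := exists_empCovMat_eq hNR hΛ
    exact ⟨ξ, fun _ _ => rfl, empCovKer_eq_sum_empCovMat g ξ⟩
  refine ⟨realize, Set.ext fun k => ⟨?_, ?_⟩⟩
  · rintro ⟨ξ, hk⟩
    exact ⟨_, empCovMat_posSemidef ξ,
      fun u v => (hk u v).trans (empCovKer_eq_sum_empCovMat g ξ u v)⟩
  · rintro ⟨Λ, hΛ, hk⟩
    obtain ⟨ξ, -, hker⟩ := realize Λ hΛ
    exact ⟨ξ, fun u v => (hk u v).trans (hker u v).symm⟩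

/-- **Equivalence between CovNet kernels and empirical covariances of shared-structure
networks.**  If `N > R ≥ 1` then: (a) for every positive semi-definite `Λ ∈ ℝ^{R×R}` there
are coefficient vectors `ξ_1, …, ξ_N ∈ ℝ^R` whose centered empirical covariance matrix is
exactly `Λ`, and consequently the CovNet kernel `Σ_{r,s} λ_{r,s} g_r(u) g_s(v)` is the
empirical covariance kernel of the `N` fields `X_n^{NN} = Σ_r ξ_{n,r} g_r`; (b) the class of
empirical covariance kernels of `N` such fields coincides with the class of all CovNet
kernels with positive semi-definite coefficient matrix. -/
theorem covnet_empirical_class_equivalence {Q : Type*} (N R : ℕ)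
    (hR : 1 ≤ R) (hNR : R < N) (g : Fin R → Q → ℝ) :
    (∀ Λ : Matrix (Fin R) (Fin R) ℝ, Λ.PosSemidef →
      ∃ ξ : Fin N → Fin R → ℝ,
        (∀ r s, empCovMat N R ξ r s = Λ r s) ∧
        (∀ u v : Q, empCovKer N R g ξ u v = ∑ r, ∑ s, Λ r s * g r u * g s v)) ∧
    ({k : Q → Q → ℝ | ∃ ξ : Fin N → Fin R → ℝ, ∀ u v, k u v = empCovKer N R g ξ u v}
      = {k : Q → Q → ℝ | ∃ Λ : Matrix (Fin R) (Fin R) ℝ, Λ.PosSemidef ∧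
          ∀ u v, k u v = ∑ r, ∑ s, Λ r s * g r u * g s v}) :=
  covnet_empirical_class_equivalence_general N R hNR g
end
end

section
/- Let Q be a compact subset of R^d, let (T, μ) be a probability space, and let {φ_t : t ∈ T} be a family of functions in L²(Q) with ‖φ_t‖_{L²(Q)} ≤ B for all t ∈ T. Suppose f ∈ L²(Q) satisfies f(u) = ∫_T φ_t(u) dμ(t) for all u ∈ Q. Then for every integer I ≥ 1 there exist t_1,…,t_I ∈ T and weights w_1,…,w_I ≥ 0 with Σ_{i=1}^I w_i = 1 such that ‖f − Σ_{i=1}^I w_i φ_{t_i}‖_{L²(Q)} ≤ B/√I. -/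
open MeasureTheory

/-! Maurey's empirical method, derandomized, in the Hilbert space `L²(Q)`. Fubini turns
`f = ∫ φ_t dμ(t)` into `⟪h, f⟫ = ∫ ⟪h, φ_t⟫ dμ(t)` for every `h ∈ L²(Q)`, so for every `h` some `t`
has `⟪h, f⟫ ≤ ⟪h, φ_t⟫`: no functional separates `f` from the `φ_t`. For the error
`g = f - (1/n) ∑ φ_{t_i}` of an average of `n` terms, the right choice of `h` gives a `t` with
`‖(n/(n+1)) g + (1/(n+1)) (f - φ_t)‖² ≤ (n/(n+1))² ‖g‖² + B²/(n+1)²`, and by induction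
the average of `n` terms is within `B²/n` of `f` in squared norm. -/

open scoped RealInnerProductSpace

section Hilbert

variable {E T : Type*} [NormedAddCommGroup E] [InnerProductSpace ℝ E] {ψ : T → E} {F : E} {B : ℝ}

theorem exists_norm_smul_add_smul_sub_sq_le (hψ : ∀ s, ‖ψ s‖ ≤ B)
    (hF : ∀ h : E, ∃ s, ⟪h, F⟫ ≤ ⟪h, ψ s⟫) (g : E) (a b : ℝ) :
    ∃ s, ‖a • g + b • (F - ψ s)‖ ^ 2 ≤ a ^ 2 * ‖g‖ ^ 2 + b ^ 2 * B ^ 2 := by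
  -- the witness for `b • (a • g + b • F)` bounds the cross term `2ab⟪g, F - ψ s⟫`
  -- by `b² (‖ψ s‖² - ‖F‖² - ‖F - ψ s‖²)`
  obtain ⟨s, hs⟩ := hF (b • (a • g + b • F))
  refine ⟨s, ?_⟩
  have hψs : ‖ψ s‖ ^ 2 ≤ B ^ 2 := pow_le_pow_left₀ (norm_nonneg _) (hψ s) 2
  have hexpand : ‖a • g + b • (F - ψ s)‖ ^ 2 = ‖a • g + b • F‖ ^ 2
      - 2 * ⟪b • (a • g + b • F), ψ s⟫ + b ^ 2 * ‖ψ s‖ ^ 2 := by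
    rw [smul_sub, ← add_sub_assoc, norm_sub_sq_real, norm_smul, real_inner_smul_right,
      real_inner_smul_left, mul_pow, Real.norm_eq_abs, sq_abs]
  have hmean : ⟪b • (a • g + b • F), F⟫ = a * b * ⟪g, F⟫ + b ^ 2 * ‖F‖ ^ 2 := by
    simp only [inner_add_left, real_inner_smul_left, real_inner_self_eq_norm_sq]
    ring
  have hnorm : ‖a • g + b • F‖ ^ 2 = a ^ 2 * ‖g‖ ^ 2 + 2 * (a * b * ⟪g, F⟫) + b ^ 2 * ‖F‖ ^ 2 := by
    rw [norm_add_sq_real, norm_smul, norm_smul, real_inner_smul_left, real_inner_smul_right,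
      mul_pow, mul_pow, Real.norm_eq_abs, Real.norm_eq_abs, sq_abs, sq_abs]
    ring
  nlinarith [sq_nonneg b, sq_nonneg ‖F‖]

theorem exists_norm_sub_average_sq_le (hψ : ∀ s, ‖ψ s‖ ≤ B)
    (hF : ∀ h : E, ∃ s, ⟪h, F⟫ ≤ ⟪h, ψ s⟫) (n : ℕ) :
    ∃ t : Fin (n + 1) → T, ‖F - ((n + 1 : ℕ) : ℝ)⁻¹ • ∑ i, ψ (t i)‖ ^ 2 ≤ B ^ 2 / (n + 1) := by
  induction n with
  | zero =>
    obtain ⟨s, hs⟩ := exists_norm_smul_add_smul_sub_sq_le hψ hF 0 0 1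
    exact ⟨fun _ => s, by simpa using hs⟩
  | succ n ih =>
    obtain ⟨t, ht⟩ := ih
    set g := F - ((n + 1 : ℕ) : ℝ)⁻¹ • ∑ i, ψ (t i)
    obtain ⟨s, hs⟩ := exists_norm_smul_add_smul_sub_sq_le hψ hF g
      ((n + 1 : ℝ) / (n + 2)) (1 / (n + 2))
    refine ⟨Fin.snoc t s, ?_⟩
    have hsplit : F - ((n + 1 + 1 : ℕ) : ℝ)⁻¹ • ∑ i, ψ ((Fin.snoc t s : Fin (n + 2) → T) i)
        = ((n + 1 : ℝ) / (n + 2)) • g + (1 / (n + 2 : ℝ)) • (F - ψ s) := by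
      rw [Fin.sum_univ_castSucc]
      simp only [Fin.snoc_castSucc, Fin.snoc_last, g]
      match_scalars <;> field_simp <;> ring
    rw [hsplit]
    calc _ ≤ _ := hs
      _ ≤ ((n + 1 : ℝ) / (n + 2)) ^ 2 * (B ^ 2 / (n + 1)) + (1 / (n + 2 : ℝ)) ^ 2 * B ^ 2 := by
          gcongr
      _ = B ^ 2 / ((n + 1 : ℕ) + 1) := by
          push_cast
          field_simp
          ring

theorem exists_norm_sub_average_le (hψ : ∀ s, ‖ψ s‖ ≤ B)
    (hF : ∀ h : E, ∃ s, ⟪h, F⟫ ≤ ⟪h, ψ s⟫) {I : ℕ} (hI : I ≠ 0) :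
    ∃ t : Fin I → T, ‖F - (I : ℝ)⁻¹ • ∑ i, ψ (t i)‖ ≤ B / √I := by
  obtain ⟨s, -⟩ := hF 0
  have hB : 0 ≤ B := (norm_nonneg _).trans (hψ s)
  obtain ⟨n, rfl⟩ := Nat.exists_eq_succ_of_ne_zero hI
  obtain ⟨t, ht⟩ := exists_norm_sub_average_sq_le hψ hF n
  refine ⟨t, (pow_le_pow_iff_left₀ (norm_nonneg _) (by positivity) two_ne_zero).1 ?_⟩
  rw [div_pow, Real.sq_sqrt (Nat.cast_nonneg _)]
  exact_mod_cast ht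

end Hilbert

section L2

variable {α T : Type*} [MeasurableSpace α] [MeasurableSpace T] {ρ : Measure α} {μ : Measure T}

theorem MeasureTheory.L2.inner_eq_integral_mul_of_ae_eq {x y : α →₂[ρ] ℝ} {g : α → ℝ}
    (hy : y =ᵐ[ρ] g) : ⟪x, y⟫ = ∫ u, x u * g u ∂ρ :=
  integral_congr_ae (hy.mono fun u hu => by dsimp only; rw [Real.inner_apply, hu])

theorem MeasureTheory.L2.norm_eq_sqrt_integral_sq_of_ae_eq {x : α →₂[ρ] ℝ} {g : α → ℝ}
    (hx : x =ᵐ[ρ] g) : ‖x‖ = √(∫ u, g u ^ 2 ∂ρ) := by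
  rw [← Real.sqrt_sq (norm_nonneg x), ← real_inner_self_eq_norm_sq,
    L2.inner_eq_integral_mul_of_ae_eq hx]
  exact congrArg _ (integral_congr_ae (hx.mono fun u hu => by dsimp only; rw [hu, sq]))

theorem sq_integral_le_integral_sq [IsProbabilityMeasure μ] {X : T → ℝ} (hX : MemLp X 2 μ) :
    (∫ t, X t ∂μ) ^ 2 ≤ ∫ t, X t ^ 2 ∂μ := by
  have := ProbabilityTheory.variance_nonneg X μ
  rw [ProbabilityTheory.variance_eq_sub hX] at this
  simpa using this

variable [SFinite ρ] {φ : T → α → ℝ}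

theorem memLp_uncurry_of_integral_sq_le [IsFiniteMeasure μ]
    (hmeas : Measurable (Function.uncurry φ)) (hL2 : ∀ t, MemLp (φ t) 2 ρ) {C : ℝ}
    (hC : ∀ t, ∫ u, φ t u ^ 2 ∂ρ ≤ C) :
    MemLp (Function.uncurry φ) 2 (μ.prod ρ) := by
  refine (memLp_two_iff_integrable_sq hmeas.aestronglyMeasurable).2 <|
    (integrable_prod_iff (hmeas.pow_const 2).aestronglyMeasurable).2
      ⟨ae_of_all _ fun t => (hL2 t).integrable_sq, ?_⟩
  refine (integrable_const C).mono'
    (hmeas.pow_const 2).aestronglyMeasurable.norm.integral_prod_right' (ae_of_all _ fun t => ?_)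
  simp only [Function.uncurry_apply_pair, norm_pow, Real.norm_eq_abs, sq_abs]
  rw [abs_of_nonneg (integral_nonneg fun u => sq_nonneg _)]
  exact hC t

theorem memLp_integral_of_memLp_uncurry [IsProbabilityMeasure μ]
    (hmeas : Measurable (Function.uncurry φ)) (hφ : MemLp (Function.uncurry φ) 2 (μ.prod ρ)) :
    MemLp (fun u => ∫ t, φ t u ∂μ) 2 ρ := by
  have hm : StronglyMeasurable fun u => ∫ t, φ t u ∂μ :=
    hmeas.stronglyMeasurable.integral_prod_left'
  refine (memLp_two_iff_integrable_sq hm.aestronglyMeasurable).2 <|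
    hφ.integrable_sq.integral_prod_right.mono' (hm.aestronglyMeasurable.pow 2) ?_
  filter_upwards [hφ.integrable_sq.prod_left_ae] with u hu
  rw [Real.norm_eq_abs, abs_of_nonneg (sq_nonneg _)]
  exact sq_integral_le_integral_sq <| (memLp_two_iff_integrable_sq
    hmeas.of_uncurry_right.aestronglyMeasurable).2 hu

theorem integrable_mul_uncurry [IsProbabilityMeasure μ] {h : α → ℝ} (hh : MemLp h 2 ρ)
    (hφ : MemLp (Function.uncurry φ) 2 (μ.prod ρ)) :
    Integrable (fun p : T × α => h p.2 * φ p.1 p.2) (μ.prod ρ) :=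
  (hh.comp_measurePreserving measurePreserving_snd).integrable_mul hφ

theorem exists_inner_le_inner_toLp [IsProbabilityMeasure μ]
    (hL2 : ∀ t, MemLp (φ t) 2 ρ) (hφ : MemLp (Function.uncurry φ) 2 (μ.prod ρ))
    (hF : MemLp (fun u => ∫ t, φ t u ∂μ) 2 ρ) (h : α →₂[ρ] ℝ) :
    ∃ s, ⟪h, hF.toLp _⟫ ≤ ⟪h, (hL2 s).toLp (φ s)⟫ := by
  have hint := integrable_mul_uncurry (Lp.memLp h) hφ
  simp_rw [L2.inner_eq_integral_mul_of_ae_eq (MemLp.coeFn_toLp _), ← integral_const_mul]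
  rw [← integral_integral_swap hint]
  exact exists_integral_le hint.integral_prod_left

end L2

/-- **Maurey-type approximation lemma (Lemma `approximation_general`).**
Let `Q ⊆ ℝᵈ` be compact, `(T, μ)` a probability space and `{φ_t : t ∈ T}` a family of
functions in `L²(Q)` with `‖φ_t‖_{L²(Q)} ≤ B` for all `t`.  If `f(u) = ∫_T φ_t(u) dμ(t)`
for all `u ∈ Q`, then for every `I ≥ 1` there are `t_1, …, t_I ∈ T` and convex weights
`w_1, …, w_I` with `‖f − Σ_i w_i φ_{t_i}‖_{L²(Q)} ≤ B / √I`. -/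
theorem maurey_approximation {d : ℕ} (Q : Set (Fin d → ℝ)) (hQ : IsCompact Q)
    {T : Type*} [MeasurableSpace T] (μ : Measure T) [IsProbabilityMeasure μ]
    (φ : T → (Fin d → ℝ) → ℝ) (B : ℝ)
    (hmeas : Measurable (Function.uncurry φ))
    (hL2 : ∀ t, MemLp (φ t) 2 (volume.restrict Q))
    (hB : ∀ t, Real.sqrt (∫ u in Q, (φ t u) ^ 2) ≤ B)
    (f : (Fin d → ℝ) → ℝ)
    (hf : ∀ u ∈ Q, f u = ∫ t, φ t u ∂μ) :
    ∀ I : ℕ, 1 ≤ I → ∃ (t : Fin I → T) (w : Fin I → ℝ),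
      (∀ i, 0 ≤ w i) ∧ (∑ i, w i) = 1 ∧
      Real.sqrt (∫ u in Q, (f u - ∑ i, w i * φ (t i) u) ^ 2) ≤ B / Real.sqrt I := by
  intro I hI
  have hI0 : I ≠ 0 := Nat.one_le_iff_ne_zero.1 hI
  have hφ : MemLp (Function.uncurry φ) 2 (μ.prod (volume.restrict Q)) :=
    memLp_uncurry_of_integral_sq_le hmeas hL2 fun t => (Real.sqrt_le_iff.1 (hB t)).2
  have hF := memLp_integral_of_memLp_uncurry hmeas hφ
  let ψ : T → Lp ℝ 2 (volume.restrict Q) := fun t => (hL2 t).toLp (φ t)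
  have hψ : ∀ t, ‖ψ t‖ ≤ B := fun t => by
    rw [L2.norm_eq_sqrt_integral_sq_of_ae_eq (MemLp.coeFn_toLp _)]
    exact hB t
  obtain ⟨t, ht⟩ := exists_norm_sub_average_le hψ (exists_inner_le_inner_toLp hL2 hφ hF) hI0
  refine ⟨t, fun _ => (I : ℝ)⁻¹, fun _ => by positivity, by simp [hI0], ?_⟩
  have hae : ⇑(hF.toLp _ - (I : ℝ)⁻¹ • ∑ i, ψ (t i)) =ᵐ[volume.restrict Q]
      fun u => f u - ∑ i, (I : ℝ)⁻¹ * φ (t i) u := by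
    filter_upwards [Lp.coeFn_sub (hF.toLp _) ((I : ℝ)⁻¹ • ∑ i, ψ (t i)),
      Lp.coeFn_smul (I : ℝ)⁻¹ (∑ i, ψ (t i)),
      Lp.coeFn_fun_finsetSum Finset.univ fun i => ψ (t i), hF.coeFn_toLp,
      ae_all_iff.2 fun i => (hL2 (t i)).coeFn_toLp,
      (ae_restrict_iff' hQ.measurableSet).2 (ae_of_all _ hf)] with u h1 h2 h3 h4 h5 h6
    rw [h1, Pi.sub_apply, h2, Pi.smul_apply, h3, h4, h6, smul_eq_mul, Finset.mul_sum]
    simp only [ψ, h5]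
  rw [← L2.norm_eq_sqrt_integral_sq_of_ae_eq hae]
  exact ht
end

section
/- Let I ⊂ R^k be compact and let H be a collection of functions from I to R with ‖h‖_{L²(I)} ≤ M for all h ∈ H. For γ > 0 and an integer R ≥ 1, define E_{R,H,γ} = {Σ_{i=1}^R α_i h_i : h_i ∈ H, 0 ≤ α_i ≤ γ}. Then for any ε_1, ε_2 > 0, the covering number satisfies N(ε_1 + ε_2, E_{R,H,γ}, ‖·‖_{L²(I)}) ≤ { (MRγ/(2ε_2) + 1) × N(ε_1/(Rγ), H, ‖·‖_{L²(I)}) }^R. -/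
open MeasureTheory
open scoped ENNReal

noncomputable section

/-- The `L²(S)` distance between two functions. -/
def L2dist {α : Type*} [MeasureSpace α] (S : Set α) (f g : α → ℝ) : ℝ :=
  Real.sqrt (∫ x in S, (f x - g x) ^ 2)

/-- The `ε`-covering number of `T` with respect to the (pseudo-)distance `ρ`: the smallest
cardinality of a finite subset `T' ⊆ T` such that every `t ∈ T` is within distance `ε` of
some `t' ∈ T'`; it is `∞` if no finite cover exists. -/
def covN {β : Type*} (ρ : β → β → ℝ) (ε : ℝ) (T : Set β) : ℝ≥0∞ :=
  sInf ((fun F : Finset β => (F.card : ℝ≥0∞)) ''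
    {F : Finset β | ↑F ⊆ T ∧ ∀ t ∈ T, ∃ t' ∈ F, ρ t t' ≤ ε})

/-!
Cover `H` by a minimal `ε₁ / (Rγ)`-net `F ⊆ H` and the coefficient range `[0, γ]` by a grid `G`
of mesh `2ε₂ / (MR)`. Replacing each `hᵢ` by a nearest net point and each `αᵢ` by a nearest grid
point moves `∑ αᵢ hᵢ` by at most `∑ᵢ (γ · ε₁ / (Rγ) + M · ε₂ / (MR)) = ε₁ + ε₂` in `L²`, so the
`(|F| · |G|)^R` combinations of net points with grid coefficients form an `(ε₁ + ε₂)`-cover.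
-/

section CoveringNumber

variable {β : Type*} {ρ : β → β → ℝ} {ε : ℝ} {T : Set β}

lemma covN_le_card {F : Finset β} (hFT : ↑F ⊆ T) (hF : ∀ t ∈ T, ∃ t' ∈ F, ρ t t' ≤ ε) :
    covN ρ ε T ≤ F.card :=
  sInf_le ⟨F, ⟨hFT, hF⟩, rfl⟩

lemma covN_empty : covN ρ ε ∅ = 0 :=
  nonpos_iff_eq_zero.1 <| (covN_le_card (F := ∅) (by simp) (by simp)).trans_eq (by simp)

lemma exists_finset_card_eq_covN (h : covN ρ ε T ≠ ⊤) :
    ∃ F : Finset β, ↑F ⊆ T ∧ (∀ t ∈ T, ∃ t' ∈ F, ρ t t' ≤ ε) ∧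
      (F.card : ℝ≥0∞) = covN ρ ε T := by
  set S := {F : Finset β | ↑F ⊆ T ∧ ∀ t ∈ T, ∃ t' ∈ F, ρ t t' ≤ ε}
  have hS : (Finset.card '' S).Nonempty := by
    by_contra hS
    simp only [Set.image_nonempty, Set.not_nonempty_iff_eq_empty] at hS
    simp [covN, S, hS] at h
  obtain ⟨F, hF, hcard⟩ := Nat.sInf_mem hS
  refine ⟨F, hF.1, hF.2, le_antisymm ?_ (covN_le_card hF.1 hF.2)⟩
  refine le_sInf ?_
  rintro _ ⟨F', hF', rfl⟩
  rw [hcard]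
  exact Nat.cast_le.2 (Nat.sInf_le (Set.mem_image_of_mem Finset.card hF'))

end CoveringNumber

lemma exists_finset_Icc_cover {γ r : ℝ} (hγ : 0 < γ) (hr : 0 < r) :
    ∃ G : Finset ℝ, ↑G ⊆ Set.Icc 0 γ ∧ (G.card : ℝ≥0∞) ≤ ENNReal.ofReal (γ / (2 * r) + 1) ∧
      ∀ a ∈ Set.Icc 0 γ, ∃ b ∈ G, |a - b| ≤ r := by
  set m := ⌈γ / (2 * r)⌉₊
  have hm : 0 < m := Nat.ceil_pos.2 (by positivity)
  have hm' : (0 : ℝ) < m := by exact_mod_cast hm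
  -- midpoints of the `m` intervals of length `s = γ / m ≤ 2 r` subdividing `[0, γ]`
  set s := γ / m
  have hs : 0 < s := by positivity
  have hsr : s ≤ 2 * r := by
    rw [div_le_iff₀ hm', ← div_le_iff₀' (by positivity)]
    exact Nat.le_ceil _
  refine ⟨(Finset.range m).image fun j : ℕ => ((j : ℝ) + 1 / 2) * s, ?_, ?_, ?_⟩
  · intro b hb
    obtain ⟨j, hj, rfl⟩ := Finset.mem_image.1 hb
    have hj' : (j : ℝ) + 1 ≤ m := by exact_mod_cast Finset.mem_range.1 hj
    constructor
    · positivity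
    · calc ((j : ℝ) + 1 / 2) * s ≤ m * s := by gcongr; linarith
        _ = γ := mul_div_cancel₀ _ hm'.ne'
  · calc ((Finset.range m).image _).card ≤ (m : ℝ≥0∞) := by
          exact_mod_cast Finset.card_image_le.trans (Finset.card_range m).le
      _ = ENNReal.ofReal m := (ENNReal.ofReal_natCast m).symm
      _ ≤ ENNReal.ofReal (γ / (2 * r) + 1) :=
          ENNReal.ofReal_le_ofReal (Nat.ceil_lt_add_one (by positivity)).le
  · rintro a ⟨ha0, haγ⟩
    set x := a / s
    set j := ⌈x⌉₊ - 1
    have hx : 0 ≤ x := by positivity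
    have hxm : x ≤ m := by
      rw [div_le_iff₀ hs]
      exact haγ.trans_eq (mul_div_cancel₀ _ hm'.ne').symm
    have hjm : j < m := by
      have := Nat.ceil_le.2 hxm
      omega
    have hjx : (j : ℝ) ≤ x :=
      (Nat.cast_le.2 (by have := Nat.ceil_le_floor_add_one x; omega)).trans (Nat.floor_le hx)
    have hxj : x ≤ j + 1 :=
      (Nat.le_ceil x).trans (by exact_mod_cast (by omega : ⌈x⌉₊ ≤ j + 1))
    refine ⟨((j : ℝ) + 1 / 2) * s, Finset.mem_image.2 ⟨j, Finset.mem_range.2 hjm, rfl⟩, ?_⟩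
    have ha : a = x * s := (div_mul_cancel₀ _ hs.ne').symm
    rw [abs_le, ha]
    constructor <;> nlinarith

lemma exists_finset_Icc_mul_abs_sub_le {M γ η : ℝ} (hM : 0 ≤ M) (hγ : 0 < γ) (hη : 0 < η) :
    ∃ G : Finset ℝ, ↑G ⊆ Set.Icc 0 γ ∧ (G.card : ℝ≥0∞) ≤ ENNReal.ofReal (M * γ / (2 * η) + 1) ∧
      ∀ a ∈ Set.Icc 0 γ, ∃ b ∈ G, M * |a - b| ≤ η := by
  rcases hM.eq_or_lt with rfl | hM
  · exact ⟨{0}, by simp [hγ.le], by simp, fun _ _ => ⟨0, by simp, by simpa using hη.le⟩⟩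
  obtain ⟨G, hGγ, hGcard, hG⟩ := exists_finset_Icc_cover hγ (div_pos hη hM)
  refine ⟨G, hGγ, hGcard.trans_eq ?_, fun a ha => ?_⟩
  · congr 2
    field_simp
  · obtain ⟨b, hb, hab⟩ := hG a ha
    exact ⟨b, hb, (le_div_iff₀' hM).1 hab⟩

section NormedSpace

variable {E : Type*} [SeminormedAddCommGroup E]

lemma norm_smul_sub_smul_le {𝕜 : Type*} [NormedField 𝕜] [NormedSpace 𝕜 E] (a b : 𝕜) (u v : E) :
    ‖a • u - b • v‖ ≤ ‖a‖ * ‖u - v‖ + ‖a - b‖ * ‖v‖ := by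
  calc ‖a • u - b • v‖ = ‖a • (u - v) + (a - b) • v‖ := by
        rw [smul_sub, sub_smul, sub_add_sub_cancel]
    _ ≤ ‖a‖ * ‖u - v‖ + ‖a - b‖ * ‖v‖ := by
        simpa only [norm_smul] using norm_add_le (a • (u - v)) ((a - b) • v)

lemma norm_sum_smul_sub_sum_smul_le [NormedSpace ℝ E] {ι : Type*} [Fintype ι] {u v : ι → E}
    {a b : ι → ℝ} {γ δ M η : ℝ} (huv : ∀ i, ‖u i - v i‖ ≤ δ) (hv : ∀ i, ‖v i‖ ≤ M)
    (ha : ∀ i, a i ∈ Set.Icc 0 γ) (hab : ∀ i, M * |a i - b i| ≤ η) :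
    ‖∑ i, a i • u i - ∑ i, b i • v i‖ ≤ Fintype.card ι * (γ * δ + η) := by
  have hterm : ∀ i, ‖a i • u i - b i • v i‖ ≤ γ * δ + η := fun i => by
    have h₁ : ‖a i‖ * ‖u i - v i‖ ≤ γ * δ := by
      rw [Real.norm_of_nonneg (ha i).1]
      exact mul_le_mul (ha i).2 (huv i) (norm_nonneg _) ((ha i).1.trans (ha i).2)
    have h₂ : ‖a i - b i‖ * ‖v i‖ ≤ η := by
      rw [Real.norm_eq_abs, mul_comm]
      exact (mul_le_mul_of_nonneg_right (hv i) (abs_nonneg _)).trans (hab i)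
    exact (norm_smul_sub_smul_le _ _ _ _).trans (add_le_add h₁ h₂)
  calc ‖∑ i, a i • u i - ∑ i, b i • v i‖ = ‖∑ i, (a i • u i - b i • v i)‖ := by
        rw [Finset.sum_sub_distrib]
    _ ≤ ∑ i, ‖a i • u i - b i • v i‖ := norm_sum_le _ _
    _ ≤ ∑ _i : ι, (γ * δ + η) := Finset.sum_le_sum fun i _ => hterm i
    _ = Fintype.card ι * (γ * δ + η) := by
        rw [Finset.sum_const, Finset.card_univ, nsmul_eq_mul]

end NormedSpace

namespace MeasureTheory.MemLp

variable {α : Type*} [MeasurableSpace α] {μ : Measure α}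

lemma norm_toLp_eq_sqrt_integral_sq {f : α → ℝ} (hf : MemLp f 2 μ) :
    ‖hf.toLp f‖ = √(∫ x, f x ^ 2 ∂μ) := by
  rw [Lp.norm_toLp, hf.eLpNorm_eq_integral_rpow_norm two_ne_zero ENNReal.ofNat_ne_top,
    ENNReal.toReal_ofReal (by positivity), Real.sqrt_eq_rpow]
  simp

lemma toLp_finsetSum {E : Type*} [NormedAddCommGroup E] {p : ℝ≥0∞} {ι : Type*} (s : Finset ι)
    {f : ι → α → E} (hf : ∀ i, MemLp (f i) p μ) :
    (memLp_finsetSum s fun i _ => hf i).toLp (fun x => ∑ i ∈ s, f i x) =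
      ∑ i ∈ s, (hf i).toLp (f i) := by
  classical
  induction s using Finset.induction_on with
  | empty =>
    simp only [Finset.sum_empty]
    rfl
  | insert i s hi ih =>
    rw [Finset.sum_insert hi, ← ih, ← toLp_add]
    exact toLp_congr _ _ (Filter.Eventually.of_forall fun x => by simp [Finset.sum_insert hi])

end MeasureTheory.MemLp

section L2

variable {α : Type*} [MeasureSpace α] {S : Set α}

lemma L2dist_eq_norm_toLp_sub {f g : α → ℝ} (hf : MemLp f 2 (volume.restrict S))
    (hg : MemLp g 2 (volume.restrict S)) : L2dist S f g = ‖hf.toLp f - hg.toLp g‖ := by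
  rw [← MemLp.toLp_sub, MemLp.norm_toLp_eq_sqrt_integral_sq]
  rfl

lemma L2dist_sum_mul_le {ι : Type*} [Fintype ι] {h h' : ι → α → ℝ} {a b : ι → ℝ}
    {γ δ M η : ℝ} (hh : ∀ i, MemLp (h i) 2 (volume.restrict S))
    (hh' : ∀ i, MemLp (h' i) 2 (volume.restrict S)) (hd : ∀ i, L2dist S (h i) (h' i) ≤ δ)
    (hM : ∀ i, √(∫ x in S, h' i x ^ 2) ≤ M) (ha : ∀ i, a i ∈ Set.Icc 0 γ)
    (hab : ∀ i, M * |a i - b i| ≤ η) :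
    L2dist S (fun x => ∑ i, a i * h i x) (fun x => ∑ i, b i * h' i x) ≤
      Fintype.card ι * (γ * δ + η) := by
  have hah := fun i => (hh i).const_smul (a i)
  have hbh' := fun i => (hh' i).const_smul (b i)
  change L2dist S (fun x => ∑ i, (a i • h i) x) (fun x => ∑ i, (b i • h' i) x) ≤ _
  rw [L2dist_eq_norm_toLp_sub (memLp_finsetSum _ fun i _ => hah i)
    (memLp_finsetSum _ fun i _ => hbh' i), MemLp.toLp_finsetSum _ hah,
    MemLp.toLp_finsetSum _ hbh']
  refine norm_sum_smul_sub_sum_smul_le (u := fun i => (hh i).toLp (h i))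
    (v := fun i => (hh' i).toLp (h' i)) (fun i => ?_) (fun i => ?_) ha hab
  · rw [← L2dist_eq_norm_toLp_sub]
    exact hd i
  · rw [MemLp.norm_toLp_eq_sqrt_integral_sq]
    exact hM i

end L2

section Combinations

variable {α : Type*}

def nonnegCombinations (H : Set (α → ℝ)) (R : ℕ) (γ : ℝ) : Set (α → ℝ) :=
  {f | ∃ (h : Fin R → α → ℝ) (a : Fin R → ℝ), (∀ i, h i ∈ H) ∧ (∀ i, 0 ≤ a i ∧ a i ≤ γ) ∧
    f = fun x => ∑ i, a i * h i x}

lemma nonnegCombinations_empty {R : ℕ} (hR : 0 < R) (γ : ℝ) :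
    nonnegCombinations (∅ : Set (α → ℝ)) R γ = ∅ :=
  Set.eq_empty_of_forall_notMem fun _ ⟨_, _, hh, _⟩ => hh ⟨0, hR⟩

lemma covN_nonnegCombinations_le [MeasureSpace α] {S : Set α} {H : Set (α → ℝ)} {R : ℕ}
    {M γ δ η : ℝ} (hH : ∀ h ∈ H, MemLp h 2 (volume.restrict S))
    (hM : ∀ h ∈ H, √(∫ x in S, h x ^ 2) ≤ M) {F : Finset (α → ℝ)} (hFH : ↑F ⊆ H)
    (hF : ∀ h ∈ H, ∃ h' ∈ F, L2dist S h h' ≤ δ) {G : Finset ℝ} (hGγ : ↑G ⊆ Set.Icc 0 γ)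
    (hG : ∀ a ∈ Set.Icc 0 γ, ∃ b ∈ G, M * |a - b| ≤ η) :
    covN (L2dist S) (R * (γ * δ + η)) (nonnegCombinations H R γ) ≤
      ((F.card * G.card : ℕ) : ℝ≥0∞) ^ R := by
  classical
  let comb : (Fin R → (α → ℝ) × ℝ) → α → ℝ := fun p x => ∑ i, (p i).2 * (p i).1 x
  let C := (Fintype.piFinset fun _ : Fin R => F ×ˢ G).image comb
  have hC : C.card ≤ (F.card * G.card) ^ R :=
    Finset.card_image_le.trans (by simp [Finset.card_product])
  refine (covN_le_card (F := C) ?_ ?_).trans (by exact_mod_cast hC)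
  · intro f hf
    obtain ⟨p, hp, rfl⟩ := Finset.mem_image.1 hf
    have hp' := fun i => Finset.mem_product.1 (Fintype.mem_piFinset.1 hp i)
    exact ⟨fun i => (p i).1, fun i => (p i).2, fun i => hFH (hp' i).1, fun i => hGγ (hp' i).2, rfl⟩
  · rintro _ ⟨h, a, hh, ha, rfl⟩
    choose h' hh'F hhh' using fun i => hF (h i) (hh i)
    choose b hbG hab using fun i => hG (a i) (ha i)
    refine ⟨comb fun i => (h' i, b i), Finset.mem_image_of_mem _ <| Fintype.mem_piFinset.2
      fun i => Finset.mem_product.2 ⟨hh'F i, hbG i⟩, ?_⟩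
    simpa using L2dist_sum_mul_le (fun i => hH _ (hh i)) (fun i => hH _ (hFH (hh'F i))) hhh'
      (fun i => hM _ (hFH (hh'F i))) ha hab

end Combinations

theorem covering_nonneg_combinations_general {k : ℕ} (I : Set (Fin k → ℝ))
    (H : Set ((Fin k → ℝ) → ℝ)) (M : ℝ)
    (hH : ∀ h ∈ H, MemLp h 2 (volume.restrict I))
    (hM : ∀ h ∈ H, Real.sqrt (∫ x in I, (h x) ^ 2) ≤ M)
    (R : ℕ) (hR : 1 ≤ R) (γ : ℝ) (hγ : 0 < γ)
    (ε₁ ε₂ : ℝ) (hε₂ : 0 < ε₂) :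
    covN (L2dist I) (ε₁ + ε₂)
        {f | ∃ (h : Fin R → (Fin k → ℝ) → ℝ) (a : Fin R → ℝ),
          (∀ i, h i ∈ H) ∧ (∀ i, 0 ≤ a i ∧ a i ≤ γ) ∧
          f = fun x => ∑ i, a i * h i x}
      ≤ (ENNReal.ofReal (M * R * γ / (2 * ε₂) + 1) *
          covN (L2dist I) (ε₁ / (R * γ)) H) ^ R := by
  change covN _ _ (nonnegCombinations H R γ) ≤ _
  rcases H.eq_empty_or_nonempty with rfl | ⟨h₀, hh₀⟩
  · simp [nonnegCombinations_empty hR, covN_empty]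
  have hM0 : 0 ≤ M := (Real.sqrt_nonneg _).trans (hM h₀ hh₀)
  have hR0 : (R : ℝ) ≠ 0 := by positivity
  by_cases hN : covN (L2dist I) (ε₁ / (R * γ)) H = ⊤
  · rw [hN, ENNReal.mul_top (by positivity), ENNReal.top_pow (by omega)]
    exact le_top
  obtain ⟨F, hFH, hF, hFcard⟩ := exists_finset_card_eq_covN hN
  obtain ⟨G, hGγ, hGcard, hG⟩ :=
    exists_finset_Icc_mul_abs_sub_le hM0 hγ (η := ε₂ / R) (by positivity)
  have hε : ε₁ + ε₂ = R * (γ * (ε₁ / (R * γ)) + ε₂ / R) := by field_simp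
  have hc : M * γ / (2 * (ε₂ / R)) = M * R * γ / (2 * ε₂) := by field_simp
  rw [hε]
  refine (covN_nonnegCombinations_le hH hM hFH hF hGγ hG).trans ?_
  rw [hc] at hGcard
  rw [Nat.cast_mul, ← hFcard, mul_comm]
  gcongr

/-- **Covering number of nonnegative bounded linear combinations (Lemma
`cover_linear_combination_positive`).**  For a class `H` of functions in `L²(I)` with norms
bounded by `M`, and `E_{R,H,γ} = {Σ_{i=1}^R α_i h_i : h_i ∈ H, 0 ≤ α_i ≤ γ}`, one has for
all `ε₁, ε₂ > 0`:
`N(ε₁+ε₂, E_{R,H,γ}) ≤ {(MRγ/(2ε₂) + 1) ⬝ N(ε₁/(Rγ), H)}^R`. -/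
theorem covering_nonneg_combinations {k : ℕ} (I : Set (Fin k → ℝ)) (hI : IsCompact I)
    (H : Set ((Fin k → ℝ) → ℝ)) (M : ℝ)
    (hH : ∀ h ∈ H, MemLp h 2 (volume.restrict I))
    (hM : ∀ h ∈ H, Real.sqrt (∫ x in I, (h x) ^ 2) ≤ M)
    (R : ℕ) (hR : 1 ≤ R) (γ : ℝ) (hγ : 0 < γ)
    (ε₁ ε₂ : ℝ) (hε₁ : 0 < ε₁) (hε₂ : 0 < ε₂) :
    covN (L2dist I) (ε₁ + ε₂)
        {f | ∃ (h : Fin R → (Fin k → ℝ) → ℝ) (a : Fin R → ℝ),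
          (∀ i, h i ∈ H) ∧ (∀ i, 0 ≤ a i ∧ a i ≤ γ) ∧
          f = fun x => ∑ i, a i * h i x}
      ≤ (ENNReal.ofReal (M * R * γ / (2 * ε₂) + 1) *
          covN (L2dist I) (ε₁ / (R * γ)) H) ^ R :=
  covering_nonneg_combinations_general I H M hH hM R hR γ hγ ε₁ ε₂ hε₂
end
end
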